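/- arXiv:2212.14212 — 5 statements merged into one kernel-verified Lean document; each statement's English description precedes it below -/
import Mathlib

section
/- Let 0 < σ < 1, c₀ ≥ 1, m ≥ 1, ζ > 1, and suppose μ₀ < (1/(8^m c₀ ζ))^{1/σ} with μ₀ ∈ (0,1). Define μ_ν by μ_ν = 8^m c₀ μ_{ν-1}^{1+σ}. Then for all ν ≥ 1, μ_ν < μ₀ / ζ^ν; in particular μ_ν → 0 as ν → ∞. -/
/-- Geometric domination of the KAM error sequence: `μ_ν < μ₀ / ζ^ν`, hence
`μ_ν → 0`. -/
theorem stmt3 (m : ℕ) (hm : 1 ≤ m) (σ c₀ ζ : ℝ) (hσ : 0 < σ) (hσ1 : σ < 1)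
    (hc₀ : 1 ≤ c₀) (hζ : 1 < ζ) (μ : ℕ → ℝ) (hμ0 : μ 0 ∈ Set.Ioo (0 : ℝ) 1)
    (hμ0small : μ 0 < (1 / (8 ^ m * c₀ * ζ)) ^ (1 / σ))
    (hrec : ∀ ν : ℕ, μ (ν + 1) = 8 ^ m * c₀ * μ ν ^ (1 + σ)) :
    (∀ ν : ℕ, 1 ≤ ν → μ ν < μ 0 / ζ ^ ν) ∧
      Filter.Tendsto μ Filter.atTop (nhds 0) := by
  obtain ⟨hμ0pos, hμ01⟩ := hμ0
  have hζ0 : (0:ℝ) < ζ := lt_trans one_pos hζ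
  have h8 : (0:ℝ) < 8 ^ m := pow_pos (by norm_num) m
  have hc0 : (0:ℝ) < c₀ := lt_of_lt_of_le one_pos hc₀
  have hB : (0:ℝ) < 8 ^ m * c₀ * ζ := by positivity
  have hA : (0:ℝ) < 1 / (8 ^ m * c₀ * ζ) := by positivity
  -- key: μ0 ^ σ < 1 / (8^m c₀ ζ)
  have hkey : μ 0 ^ σ < 1 / (8 ^ m * c₀ * ζ) := by
    have := Real.rpow_lt_rpow (le_of_lt hμ0pos) hμ0small hσ
    rwa [← Real.rpow_mul (le_of_lt hA), one_div σ,
      inv_mul_cancel₀ (ne_of_gt hσ), Real.rpow_one] at this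
  -- step lemma
  have hstep : ∀ x : ℝ, 0 < x → x ≤ μ 0 → 8 ^ m * c₀ * x ^ (1 + σ) < x / ζ := by
    intro x hx hxle
    have hxσ : x ^ σ ≤ μ 0 ^ σ := Real.rpow_le_rpow (le_of_lt hx) hxle (le_of_lt hσ)
    have hx1σ : x ^ (1 + σ) = x * x ^ σ := by
      rw [Real.rpow_add hx, Real.rpow_one]
    calc 8 ^ m * c₀ * x ^ (1 + σ) = (8 ^ m * c₀ * x ^ σ) * x := by rw [hx1σ]; ring
      _ ≤ (8 ^ m * c₀ * μ 0 ^ σ) * x := by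
          apply mul_le_mul_of_nonneg_right _ (le_of_lt hx)
          exact mul_le_mul_of_nonneg_left hxσ (by positivity)
      _ < (8 ^ m * c₀ * (1 / (8 ^ m * c₀ * ζ))) * x := by
          apply mul_lt_mul_of_pos_right _ hx
          exact mul_lt_mul_of_pos_left hkey (by positivity)
      _ = x / ζ := by field_simp
  -- positivity and boundedness
  have hpos : ∀ ν, 0 < μ ν ∧ μ ν ≤ μ 0 := by
    intro ν
    induction ν with
    | zero => exact ⟨hμ0pos, le_refl _⟩
    | succ n ih =>
      obtain ⟨h1, h2⟩ := ih
      have hp : 0 < μ (n+1) := by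
        rw [hrec n]; positivity
      refine ⟨hp, le_of_lt ?_⟩
      have := hstep (μ n) h1 h2
      rw [← hrec n] at this
      calc μ (n+1) < μ n / ζ := this
        _ ≤ μ n := by
            rw [div_le_iff₀ hζ0]
            nlinarith
        _ ≤ μ 0 := h2
  have hdec : ∀ ν, μ (ν + 1) < μ ν / ζ := by
    intro ν
    have := hstep (μ ν) (hpos ν).1 (hpos ν).2
    rwa [← hrec ν] at this
  have hbound : ∀ ν : ℕ, 1 ≤ ν → μ ν < μ 0 / ζ ^ ν := by
    intro ν hν
    induction ν with
    | zero => omega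
    | succ n ih =>
      rcases Nat.eq_or_lt_of_le hν with h | h
      · have : n = 0 := by omega
        subst this
        simpa using hdec 0
      · have hn : 1 ≤ n := by omega
        have := ih hn
        calc μ (n+1) < μ n / ζ := hdec n
          _ < (μ 0 / ζ ^ n) / ζ := by gcongr
          _ = μ 0 / ζ ^ (n+1) := by rw [pow_succ]; ring
  refine ⟨hbound, ?_⟩
  have hle : ∀ ν : ℕ, μ ν ≤ μ 0 / ζ ^ ν := by
    intro ν
    rcases Nat.eq_zero_or_pos ν with h | h
    · subst h; simp
    · exact le_of_lt (hbound ν h)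
  have hnonneg : ∀ ν : ℕ, 0 ≤ μ ν := fun ν => le_of_lt (hpos ν).1
  have hg : Filter.Tendsto (fun ν : ℕ => μ 0 / ζ ^ ν) Filter.atTop (nhds 0) := by
    have : Filter.Tendsto (fun ν : ℕ => μ 0 * (1/ζ) ^ ν) Filter.atTop (nhds (μ 0 * 0)) := by
      apply Filter.Tendsto.const_mul
      apply tendsto_pow_atTop_nhds_zero_of_lt_one
      · positivity
      · rw [div_lt_one hζ0]; exact hζ
    simpa [div_eq_mul_inv, ← inv_pow] using this
  exact squeeze_zero hnonneg hle hg
end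

section
/- Let m ≥ 1 be an integer and σ = 1/(2(m+1)). Then for all integers ν ≥ 0, (1+σ)^ν · (3m² + (3m² + 3m)(σ - σ²) - 3m(1+σ)) - m² + 3m - 2 > 0. -/
/-!
With `σ = 1/(2(m+1))` the bracket equals `3m² - 3m/2 - 9m/(4(m+1))`, which exceeds
`m² - 3m + 2 = (m-1)(m-2)`; the latter is nonnegative at every integer, so the bracket is
positive and the factor `(1+σ)^ν ≥ 1` can only increase it.
-/

lemma lt_one_add_pow_mul {σ A c : ℝ} (hσ : 0 ≤ σ) (hA : 0 ≤ A) (hcA : c < A) (ν : ℕ) :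
    c < (1 + σ) ^ ν * A :=
  hcA.trans_le (le_mul_of_one_le_left hA (one_le_pow₀ (by linarith)))

lemma Int.sub_one_mul_sub_two_nonneg (n : ℤ) : 0 ≤ (n - 1) * (n - 2) := by
  rcases le_or_gt n 1 with h | h
  · exact mul_nonneg_of_nonpos_of_nonpos (by omega) (by omega)
  · exact mul_nonneg (by omega) (by omega)

lemma Nat.cast_sq_sub_three_mul_add_two_nonneg (m : ℕ) : 0 ≤ (m : ℝ) ^ 2 - 3 * m + 2 := by
  have h := Int.sub_one_mul_sub_two_nonneg m
  have h' : (0 : ℝ) ≤ ((m : ℝ) - 1) * ((m : ℝ) - 2) := by exact_mod_cast h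
  linarith

lemma bracket_eq {m σ : ℝ} (hm : m + 1 ≠ 0) (hσ : σ = 1 / (2 * (m + 1))) :
    3 * m ^ 2 + (3 * m ^ 2 + 3 * m) * (σ - σ ^ 2) - 3 * m * (1 + σ) =
      3 * m ^ 2 - 3 * m / 2 - 9 * m / (4 * (m + 1)) := by
  subst hσ
  field_simp
  ring

lemma sq_sub_three_mul_add_two_lt_bracket {m σ : ℝ} (hm : 1 ≤ m)
    (hσ : σ = 1 / (2 * (m + 1))) :
    m ^ 2 - 3 * m + 2 < 3 * m ^ 2 + (3 * m ^ 2 + 3 * m) * (σ - σ ^ 2) - 3 * m * (1 + σ) := by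
  rw [bracket_eq (by linarith) hσ]
  have hfrac : 9 * m / (4 * (m + 1)) ≤ 9 * m / 8 := by
    rw [div_le_div_iff₀ (by linarith) (by norm_num)]
    nlinarith
  nlinarith

/-- Polynomial-exponential inequality used in assumption (5g2) of the slow
rotation KAM iteration, for `σ = 1/(2(m+1))`. -/
theorem stmt6 (m : ℕ) (hm : 1 ≤ m) (σ : ℝ)
    (hσ : σ = 1 / (2 * ((m : ℝ) + 1))) :
    ∀ ν : ℕ,
      0 < (1 + σ) ^ ν *
          (3 * (m : ℝ) ^ 2 + (3 * (m : ℝ) ^ 2 + 3 * m) * (σ - σ ^ 2) -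
            3 * m * (1 + σ)) - (m : ℝ) ^ 2 + 3 * m - 2 := by
  intro ν
  have hm' : (1 : ℝ) ≤ m := by exact_mod_cast hm
  have hσ0 : 0 ≤ σ := by rw [hσ]; positivity
  have hlt := sq_sub_three_mul_add_two_lt_bracket hm' hσ
  have hc := Nat.cast_sq_sub_three_mul_add_two_nonneg m
  linarith [lt_one_add_pow_mul hσ0 (hc.trans hlt.le) hlt ν]
end

section
/- Let 𝒜 be an invertible n×n real matrix with |𝒜⁻¹| ≤ M, and let ĥ : ℝⁿ → ℝ be a C² function with ĥ(y) = O(|y|³) near 0, whose second derivatives satisfy |∂²ĥ(y)| ≤ C|y| for |y| ≤ s. Then for every p ∈ ℝⁿ with 2M|p| ≤ s and 2MCs ≤ 1/2, the equation 𝒜 y + ∇ĥ(y) = -p has a unique solution y* in the ball {|y| ≤ s}, and |y*| ≤ 2M|p|. -/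
set_option maxHeartbeats 2000000

open Metric Set Filter Topology

/-- If `|f y| ≤ C' ‖y‖³` near `0` and `f` is differentiable, then `fderiv ℝ f 0 = 0`. -/
lemma fderiv_zero_of_cubic {E : Type*} [NormedAddCommGroup E] [NormedSpace ℝ E]
    (f : E → ℝ) (hf : Differentiable ℝ f) (C' δ : ℝ) (hδ : 0 < δ)
    (hle : ∀ y : E, ‖y‖ ≤ δ → |f y| ≤ C' * ‖y‖ ^ 3) : fderiv ℝ f 0 = 0 := by
  have hf0 : f 0 = 0 := by
    have h := hle 0 (by simpa using hδ.le)
    simp only [norm_zero] at h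
    have : |f 0| ≤ 0 := by simpa using h
    exact abs_nonpos_iff.mp this
  ext v
  simp only [ContinuousLinearMap.zero_apply]
  set L : ℝ := fderiv ℝ f 0 v with hL
  set g : ℝ → ℝ := fun t => f (t • v) with hg
  have hds : HasDerivAt g L 0 := by
    have h1 : HasDerivAt (fun t : ℝ => t • v) v 0 := by
      simpa using (hasDerivAt_id (0 : ℝ)).smul_const v
    have h2 : HasFDerivAt f (fderiv ℝ f 0) ((0 : ℝ) • v) := by
      simpa using (hf 0).hasFDerivAt
    exact h2.comp_hasDerivAt 0 h1
  have hslope : Tendsto (slope g 0) (𝓝[≠] 0) (𝓝 L) :=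
    hasDerivAt_iff_tendsto_slope.mp hds
  have hzero : Tendsto (slope g 0) (𝓝[≠] 0) (𝓝 0) := by
    apply squeeze_zero_norm' (a := fun t : ℝ => |C'| * ‖v‖ ^ 3 * t ^ 2)
    · have hmem : ∀ᶠ t : ℝ in 𝓝[≠] (0 : ℝ), |t| * ‖v‖ ≤ δ := by
        have : ∀ᶠ t : ℝ in 𝓝 (0 : ℝ), |t| * ‖v‖ ≤ δ := by
          have hc : Continuous (fun t : ℝ => |t| * ‖v‖) := by continuity
          have := hc.tendsto 0
          simp only [abs_zero, zero_mul] at this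
          exact this.eventually_le_const hδ
        exact this.filter_mono nhdsWithin_le_nhds
      filter_upwards [hmem, self_mem_nhdsWithin] with t ht ht0
      have ht0 : (t : ℝ) ≠ 0 := ht0
      have hnorm : ‖t • v‖ ≤ δ := by simpa [norm_smul] using ht
      have hb := hle (t • v) hnorm
      have hsl : slope g 0 t = f (t • v) / t := by
        simp [slope, hg, hf0, div_eq_inv_mul]
      rw [hsl]
      have habs : |f (t • v) / t| = |f (t • v)| / |t| := abs_div _ _
      rw [Real.norm_eq_abs, habs]
      rw [div_le_iff₀ (abs_pos.mpr ht0)]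
      calc |f (t • v)| ≤ C' * ‖t • v‖ ^ 3 := hb
        _ ≤ |C'| * ‖t • v‖ ^ 3 := by
            gcongr; exact le_abs_self _
        _ = |C'| * ‖v‖ ^ 3 * (|t| ^ 2 * |t|) := by
            rw [norm_smul, Real.norm_eq_abs]; ring
        _ = |C'| * ‖v‖ ^ 3 * t ^ 2 * |t| := by rw [sq_abs]; ring
    · have hc : Continuous (fun t : ℝ => |C'| * ‖v‖ ^ 3 * t ^ 2) := by continuity
      have := hc.tendsto 0
      simp only [ne_eq, OfNat.ofNat_ne_zero, not_false_eq_true, zero_pow, mul_zero] at this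
      exact this.mono_left nhdsWithin_le_nhds
  exact tendsto_nhds_unique hslope hzero

/-- Frequency-retention step: for an invertible matrix `A` with `‖A⁻¹‖ ≤ M`
and a `C²` function `f = O(|y|³)` with `‖D²f(y)‖ ≤ C|y|` for `|y| ≤ s`, the
equation `A y + ∇f(y) = -p` has a unique solution `y*` in the ball of radius
`s` whenever `2M|p| ≤ s` and `2MCs ≤ 1/2`, and `|y*| ≤ 2M|p|`. -/
theorem stmt8 (n : ℕ) (M C s : ℝ) (hM : 0 < M) (hC : 0 < C) (hs : 0 < s)
    (A : EuclideanSpace ℝ (Fin n) ≃L[ℝ] EuclideanSpace ℝ (Fin n))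
    (hAinv : ‖(A.symm : EuclideanSpace ℝ (Fin n) →L[ℝ] EuclideanSpace ℝ (Fin n))‖ ≤ M)
    (f : EuclideanSpace ℝ (Fin n) → ℝ) (hf : ContDiff ℝ 2 f)
    (hcube : ∃ C' > (0 : ℝ), ∃ δ > (0 : ℝ), ∀ y : EuclideanSpace ℝ (Fin n),
      ‖y‖ ≤ δ → |f y| ≤ C' * ‖y‖ ^ 3)
    (hD2 : ∀ y : EuclideanSpace ℝ (Fin n), ‖y‖ ≤ s →
      ‖iteratedFDeriv ℝ 2 f y‖ ≤ C * ‖y‖)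
    (hsmall : 2 * M * C * s ≤ 1 / 2) :
    ∀ p : EuclideanSpace ℝ (Fin n), 2 * M * ‖p‖ ≤ s →
      (∃! y : EuclideanSpace ℝ (Fin n), ‖y‖ ≤ s ∧ A y + gradient f y = -p) ∧
      ∀ y : EuclideanSpace ℝ (Fin n),
        ‖y‖ ≤ s → A y + gradient f y = -p → ‖y‖ ≤ 2 * M * ‖p‖ := by
  -- basic facts about f
  have hfdiff : Differentiable ℝ f := hf.differentiable (by norm_num)
  have hf1 : ContDiff ℝ 1 (fderiv ℝ f) := hf.fderiv_right (by norm_num)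
  have hf1d : Differentiable ℝ (fderiv ℝ f) := hf1.differentiable one_ne_zero
  -- second derivative bound
  have hD2' : ∀ y : (EuclideanSpace ℝ (Fin n)), ‖y‖ ≤ s → ‖fderiv ℝ (fderiv ℝ f) y‖ ≤ C * ‖y‖ := by
    intro y hy
    have e1 : ‖fderiv ℝ (fderiv ℝ f) y‖ = ‖iteratedFDeriv ℝ 2 f y‖ :=
      calc ‖fderiv ℝ (fderiv ℝ f) y‖
          = ‖iteratedFDeriv ℝ 0 (fderiv ℝ (fderiv ℝ f)) y‖ := (norm_iteratedFDeriv_zero (f := fderiv ℝ (fderiv ℝ f)) (x := y)).symm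
        _ = ‖iteratedFDeriv ℝ 1 (fderiv ℝ f) y‖ := norm_iteratedFDeriv_fderiv
        _ = ‖iteratedFDeriv ℝ 2 f y‖ := norm_iteratedFDeriv_fderiv
    rw [e1]; exact hD2 y hy
  -- gradient of f at 0 is 0
  obtain ⟨C', hC', δ, hδ, hle⟩ := hcube
  have hg0 : fderiv ℝ f 0 = 0 := fderiv_zero_of_cubic f hfdiff C' δ hδ hle
  -- gradient norm identities
  have hgradnorm : ∀ y : (EuclideanSpace ℝ (Fin n)), ‖gradient f y‖ = ‖fderiv ℝ f y‖ := by
    intro y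
    rw [gradient]
    exact LinearIsometryEquiv.norm_map _ _
  -- bound on the gradient: ‖∇f y‖ ≤ C ‖y‖² for ‖y‖ ≤ s
  have hgrad : ∀ y : (EuclideanSpace ℝ (Fin n)), ‖y‖ ≤ s → ‖gradient f y‖ ≤ C * ‖y‖ ^ 2 := by
    intro y hy
    have hconv : Convex ℝ (closedBall (0 : (EuclideanSpace ℝ (Fin n))) ‖y‖) := convex_closedBall _ _
    have hmv := Convex.norm_image_sub_le_of_norm_fderiv_le
      (f := fderiv ℝ f) (s := closedBall (0 : (EuclideanSpace ℝ (Fin n))) ‖y‖) (C := C * ‖y‖)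
      (fun x _ => hf1d x)
      (fun x hx => by
        have hxle : ‖x‖ ≤ ‖y‖ := by simpa using mem_closedBall_iff_norm.mp hx
        exact le_trans (hD2' x (hxle.trans hy)) (by gcongr))
      hconv (mem_closedBall_self (norm_nonneg y))
      (show y ∈ closedBall (0 : EuclideanSpace ℝ (Fin n)) ‖y‖ by
        simp [mem_closedBall_iff_norm])
    rw [hg0] at hmv
    simp only [sub_zero] at hmv
    rw [hgradnorm]
    calc ‖fderiv ℝ f y‖ ≤ C * ‖y‖ * ‖y‖ := hmv
      _ = C * ‖y‖ ^ 2 := by ring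
  -- Lipschitz bound for the gradient on the ball of radius s
  have hlip : ∀ y y' : (EuclideanSpace ℝ (Fin n)), ‖y‖ ≤ s → ‖y'‖ ≤ s →
      ‖gradient f y - gradient f y'‖ ≤ C * s * ‖y - y'‖ := by
    intro y y' hy hy'
    have h1 : gradient f y - gradient f y'
        = (InnerProductSpace.toDual ℝ (EuclideanSpace ℝ (Fin n))).symm (fderiv ℝ f y - fderiv ℝ f y') := by
      rw [gradient, gradient, map_sub]
    rw [h1, LinearIsometryEquiv.norm_map]
    exact Convex.norm_image_sub_le_of_norm_fderiv_le
      (f := fderiv ℝ f) (s := closedBall (0 : (EuclideanSpace ℝ (Fin n))) s) (C := C * s)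
      (fun x _ => hf1d x)
      (fun x hx => by
        have hxle : ‖x‖ ≤ s := by simpa using mem_closedBall_iff_norm.mp hx
        exact le_trans (hD2' x hxle) (by gcongr))
      (convex_closedBall _ _)
      (mem_closedBall_iff_norm.mpr (by simpa using hy'))
      (mem_closedBall_iff_norm.mpr (by simpa using hy))
  have hMCs : M * C * s ≤ 1 / 4 := by nlinarith
  intro p hp
  set r : ℝ := 2 * M * ‖p‖ with hr
  have hr0 : 0 ≤ r := by positivity
  have hrs : r ≤ s := hp
  -- the map T
  set T : (EuclideanSpace ℝ (Fin n)) → (EuclideanSpace ℝ (Fin n)) := fun y => A.symm (-p - gradient f y) with hT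
  have hTnorm : ∀ z : (EuclideanSpace ℝ (Fin n)), ‖A.symm z‖ ≤ M * ‖z‖ := by
    intro z
    calc ‖A.symm z‖ ≤ ‖(A.symm : (EuclideanSpace ℝ (Fin n)) →L[ℝ] (EuclideanSpace ℝ (Fin n)))‖ * ‖z‖ :=
          (A.symm : (EuclideanSpace ℝ (Fin n)) →L[ℝ] (EuclideanSpace ℝ (Fin n))).le_opNorm z
      _ ≤ M * ‖z‖ := by gcongr
  -- fixed point equation
  have hfix : ∀ y : (EuclideanSpace ℝ (Fin n)), (A y + gradient f y = -p ↔ T y = y) := by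
    intro y
    constructor
    · intro h
      have h2 : A y = -p - gradient f y := by
        rw [← h]; abel
      simp only [hT]
      rw [← h2, ContinuousLinearEquiv.symm_apply_apply]
    · intro h
      have h2 : A y = -p - gradient f y := by
        conv_lhs => rw [← h]
        simp [hT]
      rw [h2]; abel
  -- T maps closedBall 0 r into itself
  have hmaps : ∀ y : (EuclideanSpace ℝ (Fin n)), ‖y‖ ≤ r → ‖T y‖ ≤ r := by
    intro y hy
    have hys : ‖y‖ ≤ s := hy.trans hrs
    have h1 : ‖T y‖ ≤ M * (‖p‖ + C * ‖y‖ ^ 2) := by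
      calc ‖T y‖ ≤ M * ‖-p - gradient f y‖ := hTnorm _
        _ ≤ M * (‖p‖ + C * ‖y‖ ^ 2) := by
            gcongr
            calc ‖-p - gradient f y‖ ≤ ‖-p‖ + ‖gradient f y‖ := norm_sub_le _ _
              _ ≤ ‖p‖ + C * ‖y‖ ^ 2 := by
                  rw [norm_neg]; gcongr; exact hgrad y hys
    have h2 : C * ‖y‖ ^ 2 ≤ C * s * r := by
      calc C * ‖y‖ ^ 2 = C * (‖y‖ * ‖y‖) := by ring
        _ ≤ C * (s * r) := by gcongr
        _ = C * s * r := by ring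
    have h3 : M * (C * s * r) ≤ (1 / 4) * r := by
      calc M * (C * s * r) = (M * C * s) * r := by ring
        _ ≤ (1 / 4) * r := by gcongr
    calc ‖T y‖ ≤ M * (‖p‖ + C * s * r) := by nlinarith [h1, h2, hM]
      _ = M * ‖p‖ + M * (C * s * r) := by ring
      _ ≤ M * ‖p‖ + (1 / 4) * r := by linarith
      _ ≤ r := by
          rw [hr]
          nlinarith [norm_nonneg p, mul_nonneg hM.le (norm_nonneg p)]
  -- T is 1/2-Lipschitz on the ball of radius s
  have hTlip : ∀ y y' : (EuclideanSpace ℝ (Fin n)), ‖y‖ ≤ s → ‖y'‖ ≤ s →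
      ‖T y - T y'‖ ≤ (1 / 2) * ‖y - y'‖ := by
    intro y y' hy hy'
    have h1 : T y - T y' = A.symm (gradient f y' - gradient f y) := by
      simp only [hT, ← map_sub]
      congr 1
      abel
    rw [h1]
    calc ‖A.symm (gradient f y' - gradient f y)‖
        ≤ M * ‖gradient f y' - gradient f y‖ := hTnorm _
      _ ≤ M * (C * s * ‖y' - y‖) := by gcongr; exact hlip y' y hy' hy
      _ = (M * C * s) * ‖y' - y‖ := by ring
      _ ≤ (1 / 4) * ‖y' - y‖ := by gcongr
      _ = (1 / 4) * ‖y - y'‖ := by rw [norm_sub_rev]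
      _ ≤ (1 / 2) * ‖y - y'‖ := by
          have := norm_nonneg (y - y')
          linarith
  -- Banach fixed point on the closed ball of radius r
  haveI : CompleteSpace (closedBall (0 : (EuclideanSpace ℝ (Fin n))) r) :=
    (Metric.isClosed_closedBall (x := (0 : EuclideanSpace ℝ (Fin n))) (ε := r)).completeSpace_coe
  haveI : Nonempty (closedBall (0 : (EuclideanSpace ℝ (Fin n))) r) := ⟨⟨0, mem_closedBall_self hr0⟩⟩
  have hball : ∀ y : closedBall (0 : (EuclideanSpace ℝ (Fin n))) r, ‖(y : (EuclideanSpace ℝ (Fin n)))‖ ≤ r := by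
    intro y
    simpa using mem_closedBall_iff_norm.mp y.2
  set g : closedBall (0 : (EuclideanSpace ℝ (Fin n))) r → closedBall (0 : (EuclideanSpace ℝ (Fin n))) r :=
    fun y => ⟨T y, mem_closedBall_iff_norm.mpr (by simpa using hmaps y (hball y))⟩ with hgdef
  have hcontract : ContractingWith (1 / 2 : NNReal) g := by
    constructor
    · rw [← NNReal.coe_lt_coe]
      norm_num
    · apply LipschitzWith.of_dist_le_mul
      intro a b
      have key : dist (g a) (g b) ≤ (1 / 2 : ℝ) * dist a b := by
        rw [Subtype.dist_eq (g a) (g b), Subtype.dist_eq a b, dist_eq_norm, dist_eq_norm]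
        exact hTlip a b ((hball a).trans hrs) ((hball b).trans hrs)
      rw [show ((1 / 2 : NNReal) : ℝ) = (1 / 2 : ℝ) by norm_num]
      exact key
  set ystar : (EuclideanSpace ℝ (Fin n)) := ((hcontract.fixedPoint : closedBall (0 : EuclideanSpace ℝ (Fin n)) r) : EuclideanSpace ℝ (Fin n)) with hystar
  have hTfixSub : g hcontract.fixedPoint = hcontract.fixedPoint :=
    hcontract.fixedPoint_isFixedPt
  have hTfix : T ystar = ystar := congrArg Subtype.val hTfixSub
  have hystar_r : ‖ystar‖ ≤ r := hball _
  have hystar_s : ‖ystar‖ ≤ s := hystar_r.trans hrs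
  -- uniqueness helper
  have huniq : ∀ y y' : (EuclideanSpace ℝ (Fin n)), ‖y‖ ≤ s → ‖y'‖ ≤ s → T y = y → T y' = y' → y = y' := by
    intro y y' hy hy' hfy hfy'
    have h1 : ‖y - y'‖ ≤ (1 / 2) * ‖y - y'‖ := by
      calc ‖y - y'‖ = ‖T y - T y'‖ := by rw [hfy, hfy']
        _ ≤ (1 / 2) * ‖y - y'‖ := hTlip y y' hy hy'
    have h2 : ‖y - y'‖ ≤ 0 := by linarith
    have h3 : y - y' = 0 := norm_le_zero_iff.mp h2
    linear_combination (norm := abel) h3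
  -- the a priori bound
  have hbound : ∀ y : (EuclideanSpace ℝ (Fin n)), ‖y‖ ≤ s → A y + gradient f y = -p → ‖y‖ ≤ 2 * M * ‖p‖ := by
    intro y hy heq
    have hfy : T y = y := (hfix y).mp heq
    have h1 : ‖y‖ ≤ M * (‖p‖ + C * ‖y‖ ^ 2) := by
      calc ‖y‖ = ‖T y‖ := by rw [hfy]
        _ ≤ M * ‖-p - gradient f y‖ := hTnorm _
        _ ≤ M * (‖p‖ + C * ‖y‖ ^ 2) := by
            gcongr
            calc ‖-p - gradient f y‖ ≤ ‖-p‖ + ‖gradient f y‖ := norm_sub_le _ _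
              _ ≤ ‖p‖ + C * ‖y‖ ^ 2 := by
                  rw [norm_neg]; gcongr; exact hgrad y hy
    have h2 : M * (C * ‖y‖ ^ 2) ≤ (1 / 4) * ‖y‖ := by
      have : M * C * ‖y‖ ≤ 1 / 4 := by
        calc M * C * ‖y‖ ≤ M * C * s := by gcongr
          _ ≤ 1 / 4 := hMCs
      nlinarith [norm_nonneg y]
    have h3 : ‖y‖ ≤ M * ‖p‖ + (1 / 4) * ‖y‖ := by nlinarith
    nlinarith [norm_nonneg y]
  refine ⟨⟨ystar, ⟨hystar_s, (hfix ystar).mpr hTfix⟩, ?_⟩, hbound⟩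
  intro y ⟨hy, heq⟩
  exact huniq y ystar hy hystar_s ((hfix y).mp heq) hTfix
end

section
/- Fix integers d ≥ 1, m ≥ 1, a real τ > d(d-1) - 1, σ ∈ (0, 1/3), and let ϱ = ((l+j+1)τ + l + j + 4)/((l+j+1)τ + l + j + 5) for fixed nonnegative integers l ≤ d, j ≤ m+4. If β ∈ (0, σ²/((l+j+1)τ + l + j + 5)) and λ₂ = ε^β, then for all sufficiently small ε > 0 and all ν ≥ 0: ε^{((1+σ)^ν - ϱ)σ²} · (8^m c₀)^{(1+σ)^ν - 1} · 2^{(ν+6)((l+j+1)τ + j + l + i + 2)} · ((l+j+1)τ + j + l + i + 2)! · e^{-λ₂/2^{ν+6}} ≤ (γ_{ν+1}/γ_ν)^{d+m+5}, where γ_ν = γ₀(1 - Σ_{i=1}^ν 2^{-(i+1)}) and γ₀ = ε^{(1/3 - σ)/(d+m+5)}. -/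
private lemma smallLHS {ε σ A B M G C : ℝ} (hε : 0 < ε) (hσ0 : 0 < σ)
    (hA : 0 < A) (hB : 0 < B) (hM : 1 ≤ M) (hG : 0 < G)
    (hcond2 : ε ^ (σ ^ 2) * M ≤ (2:ℝ) ^ (-(B / σ)))
    (hcond3 : ε ^ (σ ^ 2 / A) * ((2:ℝ) ^ (6 * B) * G) ≤ C)
    (ν : ℕ) (y : ℝ) (hy : y ≤ 0) :
    ε ^ (((1 + σ) ^ ν - (A - 1) / A) * σ ^ 2) * M ^ ((1 + σ) ^ ν - 1) *
      (2:ℝ) ^ (((ν : ℝ) + 6) * B) * G * Real.exp y ≤ C := by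
  have hM0 : (0:ℝ) < M := by linarith
  set x : ℝ := (1 + σ) ^ ν with hx_def
  have hx1 : (1:ℝ) ≤ x := one_le_pow₀ (by linarith)
  have hbern : 1 + (ν:ℝ) * σ ≤ x := by
    rw [hx_def]; exact one_add_mul_le_pow (by linarith) ν
  have hexp : Real.exp y ≤ 1 := Real.exp_le_one_iff.mpr hy
  have hsplit : ε ^ ((x - (A - 1) / A) * σ ^ 2) * M ^ (x - 1)
      = ε ^ (σ ^ 2 / A) * ((ε ^ (σ ^ 2)) ^ (x - 1) * M ^ (x - 1)) := by
    have e1 : (x - (A - 1) / A) * σ ^ 2 = σ ^ 2 / A + σ ^ 2 * (x - 1) := by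
      field_simp; ring
    rw [e1, Real.rpow_add hε, Real.rpow_mul hε.le]; ring
  have hmul : (ε ^ (σ ^ 2)) ^ (x - 1) * M ^ (x - 1) = (ε ^ (σ ^ 2) * M) ^ (x - 1) :=
    (Real.mul_rpow (by positivity) (by positivity)).symm
  have hmono : (ε ^ (σ ^ 2) * M) ^ (x - 1) ≤ (2:ℝ) ^ (-((ν:ℝ) * B)) := by
    calc (ε ^ (σ ^ 2) * M) ^ (x - 1) ≤ ((2:ℝ) ^ (-(B / σ))) ^ (x - 1) :=
          Real.rpow_le_rpow (by positivity) hcond2 (by linarith)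
      _ = (2:ℝ) ^ (-(B / σ) * (x - 1)) := by
          rw [← Real.rpow_mul (by norm_num)]
      _ ≤ (2:ℝ) ^ (-((ν:ℝ) * B)) := by
          apply Real.rpow_le_rpow_of_exponent_le (by norm_num)
          have h1 : (ν:ℝ) * σ ≤ x - 1 := by linarith
          have h2 : (ν:ℝ) * B = (B / σ) * ((ν:ℝ) * σ) := by field_simp
          have h3 : (B / σ) * ((ν:ℝ) * σ) ≤ (B / σ) * (x - 1) :=
            mul_le_mul_of_nonneg_left h1 (by positivity)
          nlinarith
  have hcombine : (2:ℝ) ^ (-((ν:ℝ) * B)) * (2:ℝ) ^ (((ν:ℝ) + 6) * B) = (2:ℝ) ^ (6 * B) := by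
    rw [← Real.rpow_add two_pos]
    congr 1; ring
  calc ε ^ ((x - (A - 1) / A) * σ ^ 2) * M ^ (x - 1) * (2:ℝ) ^ (((ν:ℝ) + 6) * B) * G *
        Real.exp y
      ≤ ε ^ ((x - (A - 1) / A) * σ ^ 2) * M ^ (x - 1) * (2:ℝ) ^ (((ν:ℝ) + 6) * B) * G * 1 := by
        apply mul_le_mul_of_nonneg_left hexp
        positivity
    _ = ε ^ (σ ^ 2 / A) * ((ε ^ (σ ^ 2) * M) ^ (x - 1) * (2:ℝ) ^ (((ν:ℝ) + 6) * B)) * G := by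
        rw [mul_one, hsplit, hmul]; ring
    _ ≤ ε ^ (σ ^ 2 / A) * ((2:ℝ) ^ (-((ν:ℝ) * B)) * (2:ℝ) ^ (((ν:ℝ) + 6) * B)) * G := by
        have := Real.rpow_pos_of_pos hε (σ ^ 2 / A)
        apply mul_le_mul_of_nonneg_right _ hG.le
        apply mul_le_mul_of_nonneg_left _ this.le
        exact mul_le_mul_of_nonneg_right hmono (by positivity)
    _ = ε ^ (σ ^ 2 / A) * ((2:ℝ) ^ (6 * B) * G) := by rw [hcombine]; ring
    _ ≤ C := hcond3

private lemma sumGeom : ∀ n : ℕ, ∑ t ∈ Finset.Icc 1 n, (2:ℝ) ^ (-(t:ℤ) - 1)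
    = 1 / 2 - (2:ℝ) ^ (-(n:ℤ) - 1) := by
  intro n
  induction n with
  | zero => norm_num
  | succ n ih =>
    rw [Finset.sum_Icc_succ_top (Nat.le_add_left 1 n), ih]
    have h2 : (2:ℝ) ^ (-(n:ℤ) - 1) = 2 * (2:ℝ) ^ (-((n:ℤ) + 1) - 1) := by
      rw [show -(n:ℤ) - 1 = 1 + (-((n:ℤ) + 1) - 1) by ring, zpow_add₀ (two_ne_zero), zpow_one]
    push_cast
    rw [h2]; ring

/-- Key smallness verification (assumption (5j2)) in the slow rotation KAM
iteration: for `β` below the threshold `σ²/((l+j+1)τ+l+j+5)` and all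
sufficiently small `ε > 0`, the quantity `μ_ν^σ Γ_ν^b` is dominated by
`(γ_{ν+1}/γ_ν)^{d+m+5}`, where `γ_ν = γ₀(1 - Σ_{t=1}^ν 2^{-(t+1)})` with
`γ₀ = ε^{(1/3-σ)/(d+m+5)}`, `ϱ = ((l+j+1)τ+l+j+4)/((l+j+1)τ+l+j+5)`, and the
factorial is interpreted via the Gamma function `x! = Γ(x+1)`. -/
theorem stmt12 (d m l j i : ℕ) (hd : 1 ≤ d) (hm : 1 ≤ m) (hl : l ≤ d)
    (hj : j ≤ m + 4) (τ σ c₀ β : ℝ) (hτ : (d : ℝ) * ((d : ℝ) - 1) - 1 < τ)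
    (hσ : σ ∈ Set.Ioo (0 : ℝ) (1 / 3)) (hc₀ : 1 ≤ c₀)
    (hβ : β ∈ Set.Ioo (0 : ℝ)
      (σ ^ 2 / (((l : ℝ) + j + 1) * τ + l + j + 5))) :
    ∃ ε₀ > (0 : ℝ), ∀ ε : ℝ, 0 < ε → ε < ε₀ → ∀ ν : ℕ,
      ε ^ (((1 + σ) ^ ν -
            ((((l : ℝ) + j + 1) * τ + l + j + 4) /
              (((l : ℝ) + j + 1) * τ + l + j + 5))) * σ ^ 2) *
        ((8 : ℝ) ^ m * c₀) ^ ((1 + σ) ^ ν - 1) *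
        (2 : ℝ) ^ (((ν : ℝ) + 6) * (((l : ℝ) + j + 1) * τ + j + l + i + 2)) *
        Real.Gamma ((((l : ℝ) + j + 1) * τ + j + l + i + 2) + 1) *
        Real.exp (-(ε ^ β) / 2 ^ (ν + 6)) ≤
      ((ε ^ ((1 / 3 - σ) / ((d : ℝ) + m + 5)) *
          (1 - ∑ t ∈ Finset.Icc 1 (ν + 1), (2 : ℝ) ^ (-(t : ℤ) - 1))) /
        (ε ^ ((1 / 3 - σ) / ((d : ℝ) + m + 5)) *
          (1 - ∑ t ∈ Finset.Icc 1 ν, (2 : ℝ) ^ (-(t : ℤ) - 1)))) ^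
        ((d : ℝ) + m + 5) := by
  obtain ⟨hσ0, hσ3⟩ := hσ
  have hd1 : (1:ℝ) ≤ (d:ℝ) := by exact_mod_cast hd
  have hτ1 : (-1:ℝ) < τ := by nlinarith
  have hL : (0:ℝ) < (l:ℝ) + j + 1 := by positivity
  obtain ⟨A, hA_def⟩ : ∃ A : ℝ, A = ((l : ℝ) + j + 1) * τ + l + j + 5 := ⟨_, rfl⟩
  obtain ⟨B, hB_def⟩ : ∃ B : ℝ, B = ((l : ℝ) + j + 1) * τ + j + l + i + 2 := ⟨_, rfl⟩
  have hLτ : (0:ℝ) < ((l:ℝ) + j + 1) * (τ + 1) := mul_pos hL (by linarith)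
  have hA : (4:ℝ) < A := by rw [hA_def]; nlinarith
  have hB : (0:ℝ) < B := by
    rw [hB_def]; nlinarith [Nat.cast_nonneg (α := ℝ) i]
  obtain ⟨p, hp_def⟩ : ∃ p : ℝ, p = (d:ℝ) + m + 5 := ⟨_, rfl⟩
  have hp : (0:ℝ) < p := by rw [hp_def]; positivity
  obtain ⟨M, hM_def⟩ : ∃ M : ℝ, M = (8:ℝ) ^ m * c₀ := ⟨_, rfl⟩
  have hM : (1:ℝ) ≤ M := by
    rw [hM_def]
    nlinarith [one_le_pow₀ (by norm_num : (1:ℝ) ≤ 8) (n := m)]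
  have hM0 : (0:ℝ) < M := by linarith
  obtain ⟨G, hG_def⟩ : ∃ G : ℝ, G = Real.Gamma (B + 1) := ⟨_, rfl⟩
  have hG : (0:ℝ) < G := hG_def ▸ Real.Gamma_pos_of_pos (by linarith)
  obtain ⟨C, hC_def⟩ : ∃ C : ℝ, C = ((3:ℝ)/4) ^ p := ⟨_, rfl⟩
  have hC : (0:ℝ) < C := hC_def ▸ Real.rpow_pos_of_pos (by norm_num) _
  have hσ2 : (0:ℝ) < σ ^ 2 := by positivity
  obtain ⟨r₂, hr₂_def⟩ : ∃ r : ℝ, r = ((2:ℝ) ^ (-(B/σ)) / M) ^ (σ^2)⁻¹ := ⟨_, rfl⟩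
  have hr₂ : (0:ℝ) < r₂ := hr₂_def ▸
    Real.rpow_pos_of_pos (div_pos (Real.rpow_pos_of_pos two_pos _) hM0) _
  obtain ⟨r₃, hr₃_def⟩ : ∃ r : ℝ, r = (C / ((2:ℝ) ^ (6*B) * G)) ^ (σ^2/A)⁻¹ := ⟨_, rfl⟩
  have hr₃ : (0:ℝ) < r₃ := hr₃_def ▸
    Real.rpow_pos_of_pos (div_pos hC (mul_pos (Real.rpow_pos_of_pos two_pos _) hG)) _
  refine ⟨min 1 (min r₂ r₃), by positivity, ?_⟩
  intro ε hε hεε₀ ν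
  have hε1 : ε < 1 := lt_of_lt_of_le hεε₀ (min_le_left _ _)
  have hεr₂ : ε ≤ r₂ := le_trans hεε₀.le (le_trans (min_le_right _ _) (min_le_left _ _))
  have hεr₃ : ε ≤ r₃ := le_trans hεε₀.le (le_trans (min_le_right _ _) (min_le_right _ _))
  -- condition 2 : ε^{σ²} * M ≤ 2^{-B/σ}
  have hcond2 : ε ^ (σ^2) * M ≤ (2:ℝ) ^ (-(B/σ)) := by
    have h1 : ε ^ (σ^2) ≤ r₂ ^ (σ^2) := Real.rpow_le_rpow hε.le hεr₂ hσ2.le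
    have h2 : r₂ ^ (σ^2) = (2:ℝ) ^ (-(B/σ)) / M := by
      rw [hr₂_def, ← Real.rpow_mul (by positivity),
        inv_mul_cancel₀ (by positivity : (σ:ℝ)^2 ≠ 0), Real.rpow_one]
    have := mul_le_mul_of_nonneg_right (h2 ▸ h1) hM0.le
    rwa [div_mul_cancel₀ _ (ne_of_gt hM0)] at this
  -- condition 3 : ε^{σ²/A} * (2^{6B} * G) ≤ C
  have hcond3 : ε ^ (σ^2/A) * ((2:ℝ) ^ (6*B) * G) ≤ C := by
    have h1 : ε ^ (σ^2/A) ≤ r₃ ^ (σ^2/A) :=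
      Real.rpow_le_rpow hε.le hεr₃ (by positivity)
    have h2 : r₃ ^ (σ^2/A) = C / ((2:ℝ) ^ (6*B) * G) := by
      rw [hr₃_def, ← Real.rpow_mul (by positivity),
        inv_mul_cancel₀ (by positivity : σ^2/A ≠ 0), Real.rpow_one]
    have hpos : (0:ℝ) < (2:ℝ) ^ (6*B) * G := mul_pos (Real.rpow_pos_of_pos two_pos _) hG
    have := mul_le_mul_of_nonneg_right (h2 ▸ h1) hpos.le
    rwa [div_mul_cancel₀ _ (ne_of_gt hpos)] at this
  have hzpos : ∀ n : ℕ, (0:ℝ) < 1/2 + (2:ℝ) ^ (-(n:ℤ) - 1) := by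
    intro n; have := zpow_pos (by norm_num : (0:ℝ) < 2) (-(n:ℤ) - 1); linarith
  -- RHS ≥ C
  have hRHS : C ≤
      ((ε ^ ((1 / 3 - σ) / ((d : ℝ) + m + 5)) *
          (1 - ∑ t ∈ Finset.Icc 1 (ν + 1), (2 : ℝ) ^ (-(t : ℤ) - 1))) /
        (ε ^ ((1 / 3 - σ) / ((d : ℝ) + m + 5)) *
          (1 - ∑ t ∈ Finset.Icc 1 ν, (2 : ℝ) ^ (-(t : ℤ) - 1)))) ^ ((d : ℝ) + m + 5) := by
    rw [mul_div_mul_left _ _ (ne_of_gt (Real.rpow_pos_of_pos hε _)), sumGeom, sumGeom,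
      ← hp_def]
    have e1 : (1:ℝ) - (1/2 - (2:ℝ) ^ (-((ν+1:ℕ):ℤ) - 1))
        = 1/2 + (2:ℝ) ^ (-((ν+1:ℕ):ℤ) - 1) := by ring
    have e0 : (1:ℝ) - (1/2 - (2:ℝ) ^ (-(ν:ℤ) - 1)) = 1/2 + (2:ℝ) ^ (-(ν:ℤ) - 1) := by ring
    rw [e1, e0, hC_def]
    apply Real.rpow_le_rpow (by norm_num) _ hp.le
    rw [le_div_iff₀ (hzpos ν)]
    have hsmall : (2:ℝ) ^ (-(ν:ℤ) - 1) ≤ 1/2 := by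
      calc (2:ℝ) ^ (-(ν:ℤ) - 1) ≤ (2:ℝ) ^ (-1:ℤ) :=
            zpow_le_zpow_right₀ (by norm_num) (by omega)
        _ = 1/2 := by norm_num
    have hhalf : (2:ℝ) ^ (-((ν+1:ℕ):ℤ) - 1) = (2:ℝ) ^ (-(ν:ℤ) - 1) / 2 := by
      rw [show -((ν+1:ℕ):ℤ) - 1 = (-(ν:ℤ) - 1) + (-1) by push_cast; ring,
        zpow_add₀ (two_ne_zero)]
      norm_num
      ring
    rw [hhalf]
    linarith
  refine le_trans ?_ hRHS
  have hnum : (((l : ℝ) + j + 1) * τ + l + j + 4) = A - 1 := by rw [hA_def]; ring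
  rw [hnum, ← hA_def, ← hB_def, ← hM_def, ← hG_def]
  exact smallLHS hε hσ0 (by linarith) hB hM hG hcond2 hcond3 ν _
    (div_nonpos_of_nonpos_of_nonneg (by simp [Real.rpow_nonneg hε.le]) (by positivity))
end

section
/- Let σ ∈ (0,1), and let η be a positive integer with (1+σ)^η > 2. Define μ_ν = 8^m c₀ μ_{ν-1}^{1+σ} (with c₀ ≥ 1, m ≥ 1, μ₀ ∈ (0, (8^m c₀ ζ)^{-1/σ}) for some ζ > 1) and K_{ν+1} = (⌊log(1/μ_ν)⌋ + 1)^{3η}. Then the series Σ_{ν=0}^∞ K_{ν+1}^{τ+1} μ_ν^{σ} converges for every fixed τ > 0. -/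
/-!
After the rescaling `y_ν = A^{1/σ} μ_ν` with `A = 8^m c₀`, the recursion becomes
`y_{ν+1} = y_ν^{1+σ}`, so `μ_ν ≤ β^{(1+σ)^ν}` with `β = y_0 < 1`. In the other direction
`A ≥ 1` gives `μ_ν ≥ μ_0^{(1+σ)^ν}`, hence `log (1/μ_ν) = O((1+σ)^ν)`. The terms are therefore
dominated by `(c (1+σ)^ν)^p q^{(1+σ)^ν}` with `q = β^σ < 1`, a series whose consecutive ratios
tend to `0`.
-/

open Real Filter

lemma summable_mul_pow_rpow_mul_rpow_pow {c r q : ℝ} (hc : 0 ≤ c) (hr : 1 < r) (hq0 : 0 < q)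
    (hq1 : q < 1) (p : ℝ) : Summable fun n : ℕ => (c * r ^ n) ^ p * q ^ (r ^ n) := by
  set g : ℕ → ℝ := fun n => (c * r ^ n) ^ p * q ^ (r ^ n) with hg
  have hg0 : ∀ n, 0 ≤ g n := fun n => by positivity
  set ratio : ℕ → ℝ := fun n => r ^ p * q ^ ((r - 1) * r ^ n)
  have hratio : ∀ n, g (n + 1) = ratio n * g n := fun n => by
    simp only [hg, ratio, pow_succ, ← mul_assoc]
    rw [mul_rpow (by positivity) (by positivity), show r ^ n * r = r ^ n + (r - 1) * r ^ n by ring,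
      rpow_add hq0]
    ring
  have hratio_tendsto : Tendsto ratio atTop (nhds 0) := by
    have hexp : Tendsto (fun n : ℕ => (r - 1) * r ^ n) atTop atTop :=
      (tendsto_pow_atTop_atTop_of_one_lt hr).const_mul_atTop (by linarith)
    simpa using
      ((tendsto_rpow_atTop_of_base_lt_one q (by linarith) hq1).comp hexp).const_mul (r ^ p)
  refine summable_of_ratio_norm_eventually_le (r := 1 / 2) (by norm_num) ?_
  filter_upwards [hratio_tendsto.eventually_le_const (by norm_num : (0 : ℝ) < 1 / 2)] with n hn
  rw [norm_of_nonneg (hg0 _), norm_of_nonneg (hg0 _), hratio]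
  exact mul_le_mul_of_nonneg_right hn (hg0 n)

lemma eq_rpow_pow_of_succ_eq_rpow {y : ℕ → ℝ} {r : ℝ} (h0 : 0 ≤ y 0)
    (hrec : ∀ ν, y (ν + 1) = y ν ^ r) (ν : ℕ) : y ν = y 0 ^ (r ^ ν) := by
  induction ν with
  | zero => simp
  | succ ν ih => rw [hrec, ih, pow_succ, rpow_mul h0]

lemma rpow_one_div_mul_mul_rpow_one_add {A σ x : ℝ} (hA : 0 < A) (hσ : σ ≠ 0)
    (hx : 0 ≤ x) :
    A ^ (1 / σ) * (A * x ^ (1 + σ)) = (A ^ (1 / σ) * x) ^ (1 + σ) := by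
  rw [mul_rpow (by positivity) hx, ← rpow_mul hA.le, mul_add, mul_one, one_div_mul_cancel hσ,
    rpow_add hA, rpow_one, mul_assoc]

lemma rpow_one_div_mul_lt_one {A ζ σ x : ℝ} (hA : 0 < A) (hζ : 1 < ζ) (hσ : 0 < σ)
    (hx : x < (A * ζ) ^ (-(1 / σ))) : A ^ (1 / σ) * x < 1 := by
  have hAζ : (A * ζ) ^ (-(1 / σ)) < A ^ (-(1 / σ)) :=
    rpow_lt_rpow_of_neg hA (lt_mul_of_one_lt_right hA hζ) (by simpa using hσ)
  calc A ^ (1 / σ) * x < A ^ (1 / σ) * A ^ (-(1 / σ)) :=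
        mul_lt_mul_of_pos_left (hx.trans hAζ) (by positivity)
    _ = 1 := by rw [rpow_neg hA.le, mul_inv_cancel₀ (by positivity)]

section Iteration

variable {μ : ℕ → ℝ} {A : ℝ}

lemma rpow_pow_le_of_succ_eq_mul_rpow {r : ℝ} (hA : 1 ≤ A) (hr : 0 ≤ r) (h0 : 0 ≤ μ 0)
    (hrec : ∀ ν, μ (ν + 1) = A * μ ν ^ r) (ν : ℕ) : μ 0 ^ (r ^ ν) ≤ μ ν := by
  induction ν with
  | zero => simp
  | succ ν ih =>
    calc μ 0 ^ (r ^ (ν + 1)) = (μ 0 ^ (r ^ ν)) ^ r := by rw [pow_succ, rpow_mul h0]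
      _ ≤ μ ν ^ r := rpow_le_rpow (rpow_nonneg h0 _) ih hr
      _ ≤ A * μ ν ^ r :=
        le_mul_of_one_le_left (rpow_nonneg ((rpow_nonneg h0 _).trans ih) _) hA
      _ = μ (ν + 1) := (hrec ν).symm

lemma le_rpow_pow_of_succ_eq_mul_rpow {σ : ℝ} (hA : 1 ≤ A) (hσ : 0 < σ) (h0 : 0 ≤ μ 0)
    (hrec : ∀ ν, μ (ν + 1) = A * μ ν ^ (1 + σ)) (ν : ℕ) :
    μ ν ≤ (A ^ (1 / σ) * μ 0) ^ ((1 + σ) ^ ν) := by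
  have hμ : ∀ ν, 0 ≤ μ ν := fun ν =>
    (rpow_nonneg h0 _).trans (rpow_pow_le_of_succ_eq_mul_rpow hA (by linarith) h0 hrec ν)
  have hy := eq_rpow_pow_of_succ_eq_rpow (y := fun ν => A ^ (1 / σ) * μ ν) (by positivity)
    (fun ν => by rw [hrec, rpow_one_div_mul_mul_rpow_one_add (by linarith) hσ.ne' (hμ ν)]) ν
  exact (le_mul_of_one_le_left (hμ ν) (one_le_rpow hA (by positivity))).trans_eq hy

lemma natFloor_log_one_div_add_one_le {r : ℝ} (hA : 1 ≤ A) (hr : 1 ≤ r) (h0 : 0 < μ 0)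
    (h1 : μ 0 ≤ 1) (hrec : ∀ ν, μ (ν + 1) = A * μ ν ^ r) (ν : ℕ) :
    (⌊log (1 / μ ν)⌋₊ : ℝ) + 1 ≤ (log (1 / μ 0) + 1) * r ^ ν := by
  have hlow := rpow_pow_le_of_succ_eq_mul_rpow hA (by linarith) h0.le hrec ν
  have hlog : log (1 / μ ν) ≤ r ^ ν * log (1 / μ 0) := by
    rw [one_div, one_div, log_inv, log_inv, mul_neg, neg_le_neg_iff, ← log_rpow h0]
    exact log_le_log (by positivity) hlow
  have hL : 0 ≤ log (1 / μ 0) := log_nonneg (one_le_one_div h0 h1)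
  have hrν : 1 ≤ r ^ ν := one_le_pow₀ hr
  have hfloor : (⌊log (1 / μ ν)⌋₊ : ℝ) ≤ r ^ ν * log (1 / μ 0) :=
    (Nat.cast_le.mpr (Nat.floor_le_floor hlog)).trans (Nat.floor_le (by positivity))
  nlinarith

end Iteration

theorem stmt19_general (m η : ℕ) (σ c₀ ζ τ : ℝ)
    (hσ : σ ∈ Set.Ioo (0 : ℝ) 1) (hc₀ : 1 ≤ c₀)
    (hζ : 1 < ζ) (hτ : 0 < τ) (μ : ℕ → ℝ)
    (hμ0 : μ 0 ∈ Set.Ioo (0 : ℝ) ((8 ^ m * c₀ * ζ) ^ (-(1 / σ))))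
    (hrec : ∀ ν : ℕ, μ (ν + 1) = 8 ^ m * c₀ * μ ν ^ (1 + σ)) :
    Summable (fun ν : ℕ =>
      (((Nat.floor (Real.log (1 / μ ν)) : ℝ) + 1) ^ (3 * η)) ^ (τ + 1) *
        μ ν ^ σ) := by
  obtain ⟨hσ0, -⟩ := hσ
  obtain ⟨hμ0, hμ0_lt⟩ := hμ0
  set A : ℝ := 8 ^ m * c₀
  have hA : 1 ≤ A := one_le_mul_of_one_le_of_one_le (one_le_pow₀ (by norm_num)) hc₀
  set β := A ^ (1 / σ) * μ 0
  have hβ : β < 1 := rpow_one_div_mul_lt_one (by linarith) hζ hσ0 hμ0_lt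
  have hμ01 : μ 0 ≤ 1 :=
    (le_mul_of_one_le_left hμ0.le (one_le_rpow hA (by positivity))).trans hβ.le
  have hμ : ∀ ν, 0 < μ ν := fun ν => (rpow_pos_of_pos hμ0 _).trans_le
    (rpow_pow_le_of_succ_eq_mul_rpow hA (by linarith) hμ0.le hrec ν)
  set c := log (1 / μ 0) + 1
  have hc : 0 ≤ c := by have := log_nonneg (one_le_one_div hμ0 hμ01); linarith
  have hK : ∀ ν, (⌊log (1 / μ ν)⌋₊ : ℝ) + 1 ≤ c * (1 + σ) ^ ν :=
    natFloor_log_one_div_add_one_le hA (by linarith) hμ0 hμ01 hrec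
  have hμσ : ∀ ν, μ ν ^ σ ≤ (β ^ σ) ^ ((1 + σ) ^ ν) := fun ν => by
    rw [← rpow_mul (by positivity), mul_comm, rpow_mul (by positivity)]
    exact rpow_le_rpow (hμ ν).le (le_rpow_pow_of_succ_eq_mul_rpow hA hσ0 hμ0.le hrec ν) hσ0.le
  refine Summable.of_nonneg_of_le (fun ν => by have := hμ ν; positivity) (fun ν => ?_)
    (summable_mul_pow_rpow_mul_rpow_pow (r := 1 + σ) (p := (3 * η : ℕ) * (τ + 1)) hc
      (by linarith) (by positivity) (rpow_lt_one (by positivity) hβ hσ0))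
  have := hμ ν
  rw [← rpow_natCast, ← rpow_mul (by positivity)]
  exact mul_le_mul (rpow_le_rpow (by positivity) (hK ν) (by positivity)) (hμσ ν) (by positivity)
    (by positivity)

/-- Convergence of the series `Σ_ν K_{ν+1}^{τ+1} μ_ν^σ`, where
`K_{ν+1} = (⌊log(1/μ_ν)⌋+1)^{3η}` is the Fourier truncation order and
`μ_ν = 8^m c₀ μ_{ν-1}^{1+σ}` is the superexponentially small KAM error. -/
theorem stmt19 (m η : ℕ) (hm : 1 ≤ m) (hη : 1 ≤ η) (σ c₀ ζ τ : ℝ)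
    (hσ : σ ∈ Set.Ioo (0 : ℝ) 1) (hησ : 2 < (1 + σ) ^ η) (hc₀ : 1 ≤ c₀)
    (hζ : 1 < ζ) (hτ : 0 < τ) (μ : ℕ → ℝ)
    (hμ0 : μ 0 ∈ Set.Ioo (0 : ℝ) ((8 ^ m * c₀ * ζ) ^ (-(1 / σ))))
    (hrec : ∀ ν : ℕ, μ (ν + 1) = 8 ^ m * c₀ * μ ν ^ (1 + σ)) :
    Summable (fun ν : ℕ =>
      (((Nat.floor (Real.log (1 / μ ν)) : ℝ) + 1) ^ (3 * η)) ^ (τ + 1) *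
        μ ν ^ σ) :=
  stmt19_general m η σ c₀ ζ τ hσ hc₀ hζ hτ μ hμ0 hrec
end
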